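/- arXiv:1201.3229 — 6 statements merged into one kernel-verified Lean document; each statement's English description precedes it below -/
import Mathlib

section
/- Let p be a prime, G a finite group, H a subgroup of G, and x an element of H of p-power order. Assume (a) C_G(x) ≤ H and (b) x^G ∩ H ⊆ x^H (every G-conjugate of x lying in H is already an H-conjugate of x). Then for every subgroup K of G with x ∈ K ≤ H, we have N_G(K) ≤ H. -/
theorem Subgroup.mul_inv_mem_centralizer_of_conj_eq {G : Type*} [Group G] {x g h : G}
    (hconj : g⁻¹ * x * g = h⁻¹ * x * h) : g * h⁻¹ ∈ Subgroup.centralizer {x} := by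
  rw [Subgroup.mem_centralizer_singleton_iff]
  calc g * h⁻¹ * x = g * (h⁻¹ * x * h) * h⁻¹ := by group
    _ = g * (g⁻¹ * x * g) * h⁻¹ := by rw [hconj]
    _ = x * (g * h⁻¹) := by group

theorem stmt_0_general {G : Type*} [Group G]
    (H : Subgroup G) (x : G)
    (ha : Subgroup.centralizer {x} ≤ H)
    (hb : ∀ g : G, g⁻¹ * x * g ∈ H → ∃ h ∈ H, g⁻¹ * x * g = h⁻¹ * x * h) :
    ∀ K : Subgroup G, x ∈ K → K ≤ H → Subgroup.normalizer (K : Set G) ≤ H := by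
  intro K hxK hKH g hg
  have hxgK : g⁻¹ * x * g ∈ K := (Subgroup.mem_normalizer_iff''.mp hg x).mp hxK
  obtain ⟨h, hh, hconj⟩ := hb g (hKH hxgK)
  -- `g` differs from the `H`-element `h` by an element of `C_G(x) ≤ H`.
  simpa using H.mul_mem (ha (Subgroup.mul_inv_mem_centralizer_of_conj_eq hconj)) hh

/-- **Lemma 2.1(i).** Let `p` be a prime, `G` a finite group, `H ≤ G`, and `x ∈ H` an element
of `p`-power order. If `C_G(x) ≤ H` and every `G`-conjugate of `x` lying in `H` is already an
`H`-conjugate of `x`, then for every subgroup `K` with `x ∈ K ≤ H` we have `N_G(K) ≤ H`. -/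
theorem stmt_0 {G : Type*} [Group G] [Finite G] (p : ℕ) (hp : p.Prime)
    (H : Subgroup G) (x : G) (hxH : x ∈ H) (hord : ∃ n : ℕ, orderOf x = p ^ n)
    (ha : Subgroup.centralizer {x} ≤ H)
    (hb : ∀ g : G, g⁻¹ * x * g ∈ H → ∃ h ∈ H, g⁻¹ * x * g = h⁻¹ * x * h) :
    ∀ K : Subgroup G, x ∈ K → K ≤ H → Subgroup.normalizer (K : Set G) ≤ H :=
  stmt_0_general H x ha hb
end

section
/- With the tensor-product setup over GF(3): the fixed space C_V(d₁) equals the commutator space [V,d₁], equals the span of {e⊗x⊗y : x, y ∈ {e,f}}, has dimension 4, and is totally isotropic with respect to the form B. -/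
noncomputable section

open TensorProduct

/-- The field `GF(3)`. -/
abbrev F3 := ZMod 3
/-- The 2-dimensional symplectic space `W` over `GF(3)`. -/
abbrev W := Fin 2 → F3
/-- `V = W ⊗ W ⊗ W`. -/
abbrev V := W ⊗[F3] (W ⊗[F3] W)

noncomputable instance : AddCommGroup V := inferInstance

/-- The basis vector `e` of `W`. -/
def e : W := ![1, 0]
/-- The basis vector `f` of `W`. -/
def f : W := ![0, 1]

/-- The linear automorphism `d` of `W` with `d e = e`, `d f = e + f`. -/
def d : W →ₗ[F3] W := Matrix.toLin' !![1, 1; 0, 1]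
/-- The inverse of `d`: `d⁻¹ e = e`, `d⁻¹ f = f - e`. -/
def dinv : W →ₗ[F3] W := Matrix.toLin' !![1, -1; 0, 1]

/-- `d₁ = d ⊗ 1 ⊗ 1`. -/
def d₁ : V →ₗ[F3] V := TensorProduct.map d LinearMap.id
/-- `d₂ = d ⊗ d⁻¹ ⊗ 1`. -/
def d₂ : V →ₗ[F3] V := TensorProduct.map d (TensorProduct.map dinv LinearMap.id)
/-- `d₃ = d ⊗ d ⊗ d`. -/
def d₃ : V →ₗ[F3] V := TensorProduct.map d (TensorProduct.map d d)

/-- The alternating form `⟨·,·⟩` on `W` with `⟨e,f⟩ = 1 = -⟨f,e⟩`. -/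
def ω : LinearMap.BilinForm F3 W := Matrix.toLinearMap₂' F3 !![0, 1; -1, 0]

/-- The form `B` on `V` with `B(v₁⊗v₂⊗v₃, w₁⊗w₂⊗w₃) = ⟨v₁,w₁⟩⟨v₂,w₂⟩⟨v₃,w₃⟩`. -/
def B : LinearMap.BilinForm F3 V :=
  LinearMap.BilinForm.tmul ω (LinearMap.BilinForm.tmul ω ω)

/-- The fixed space `C_V(g) = ker (g - 1)`. -/
def CV (g : V →ₗ[F3] V) : Submodule F3 V := LinearMap.ker ((g - (LinearMap.id : V →ₗ[F3] V)))
/-- The commutator space `[V,g] = im (g - 1)`. -/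
def comm1 (g : V →ₗ[F3] V) : Submodule F3 V := LinearMap.range ((g - (LinearMap.id : V →ₗ[F3] V)))
/-- The iterated commutator space `[V,g,g] = im ((g - 1)²)`. -/
def comm2 (g : V →ₗ[F3] V) : Submodule F3 V :=
  LinearMap.range (((g - (LinearMap.id : V →ₗ[F3] V)) ∘ₗ (g - (LinearMap.id : V →ₗ[F3] V))))
/-- A subspace `U` is totally isotropic if `B` vanishes identically on `U × U`. -/
def TotallyIsotropic (U : Submodule F3 V) : Prop := ∀ u ∈ U, ∀ v ∈ U, B u v = 0

/-!
`d - 1` is the rank-one map `w ↦ w₁ e`, the composite `W → F → W` of `w ↦ w₁` and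
`c ↦ c e`, and `0 → F → W → F → 0` is exact. Tensoring with `W ⊗ W` keeps it exact, so
`d₁ - 1 = i ∘ π` with `i` injective, `π` surjective and `range i = ker π`. Hence
`ker (d₁ - 1) = range i = range (d₁ - 1) = e ⊗ (W ⊗ W)`, a 4-dimensional subspace that is
totally isotropic because `⟨e, e⟩ = 0`.
-/

open LinearMap

theorem LinearMap.ker_comp_eq_range_of_exact {R M N : Type*} [CommRing R] [AddCommGroup M]
    [AddCommGroup N] [Module R M] [Module R N] {i : N →ₗ[R] M} {π : M →ₗ[R] N}
    (hi : Function.Injective i) (h : Function.Exact i π) : ker (i ∘ₗ π) = range i := by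
  rw [ker_comp_of_ker_eq_bot _ (ker_eq_bot.mpr hi), h.linearMap_ker_eq]

theorem range_rTensor_toSpanSingleton {R M N : Type*} [CommRing R] [AddCommGroup M]
    [AddCommGroup N] [Module R M] [Module R N] (m : M) :
    range ((toSpanSingleton R M m).rTensor N) = range (TensorProduct.mk R M N m) := by
  have : (toSpanSingleton R M m).rTensor N ∘ₗ (TensorProduct.lid R N).symm.toLinearMap =
      TensorProduct.mk R M N m := by
    ext n; simp
  rw [← this, range_comp_of_range_eq_top _
    (range_eq_top.mpr (TensorProduct.lid R N).symm.surjective)]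

theorem span_e_f : Submodule.span F3 {e, f} = ⊤ := by
  refine Submodule.eq_top_iff'.mpr fun w => ?_
  have : w = w 0 • e + w 1 • f := by
    funext i; fin_cases i <;> simp [e, f]
  rw [this]
  exact Submodule.add_mem _ (Submodule.smul_mem _ _ (Submodule.subset_span (by simp)))
    (Submodule.smul_mem _ _ (Submodule.subset_span (by simp)))

theorem d_sub_id : d - LinearMap.id = toSpanSingleton F3 W e ∘ₗ LinearMap.proj 1 := by
  ext i j; fin_cases i <;> fin_cases j <;> simp [d, e]

theorem exact_toSpanSingleton_e_proj_one :
    Function.Exact (toSpanSingleton F3 W e) (LinearMap.proj 1 : W →ₗ[F3] F3) := by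
  intro w
  simp only [proj_apply, Set.mem_range, toSpanSingleton_apply]
  constructor
  · intro hw
    exact ⟨w 0, by funext i; fin_cases i <;> simp [e, hw]⟩
  · rintro ⟨c, rfl⟩
    simp [e]

theorem toSpanSingleton_e_injective : Function.Injective (toSpanSingleton F3 W e) := by
  intro a b h
  simpa [e] using congrFun h 0

theorem proj_one_surjective : Function.Surjective (LinearMap.proj 1 : W →ₗ[F3] F3) :=
  fun c => ⟨Pi.single 1 c, by simp⟩

theorem omega_e_e : ω e e = 0 := by
  simp [ω, e, Matrix.toLinearMap₂'_apply, Fin.sum_univ_succ]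

theorem d₁_sub_id : d₁ - LinearMap.id = (toSpanSingleton F3 W e).rTensor (W ⊗[F3] W) ∘ₗ
    (LinearMap.proj 1 : W →ₗ[F3] F3).rTensor (W ⊗[F3] W) := by
  rw [← rTensor_comp, ← d_sub_id, rTensor_sub, rTensor_id]
  rfl

theorem span_generators : Submodule.span F3
      {e ⊗ₜ[F3] (e ⊗ₜ[F3] e), e ⊗ₜ[F3] (e ⊗ₜ[F3] f),
       e ⊗ₜ[F3] (f ⊗ₜ[F3] e), e ⊗ₜ[F3] (f ⊗ₜ[F3] f)} =
    range (TensorProduct.mk F3 W (W ⊗[F3] W) e) := by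
  rw [range_eq_map, ← TensorProduct.map₂_mk_top_top_eq_top, ← span_e_f,
    Submodule.map₂_span_span, Submodule.map_span]
  congr 1
  ext
  simp only [Set.image2_insert_left, Set.image2_singleton_left, Set.image_insert_eq,
    Set.image_singleton, Set.image_union, Set.mem_union, Set.mem_insert_iff,
    Set.mem_singleton_iff, mk_apply]
  tauto

theorem totallyIsotropic_range_mk_e :
    TotallyIsotropic (range (TensorProduct.mk F3 W (W ⊗[F3] W) e)) := by
  rintro _ ⟨s, rfl⟩ _ ⟨t, rfl⟩
  simp [B, omega_e_e]

theorem finrank_range_mk_e :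
    Module.finrank F3 (range (TensorProduct.mk F3 W (W ⊗[F3] W) e)) = 4 := by
  rw [← range_rTensor_toSpanSingleton, finrank_range_of_inj
    (Module.Flat.rTensor_preserves_injective_linearMap _ toSpanSingleton_e_injective)]
  simp [Module.finrank_tensorProduct]

/-- **Lemma 3.1(i).** `C_V(d₁) = [V,d₁]` equals the span of `{e⊗x⊗y : x,y ∈ {e,f}}`, has
dimension 4 and is totally isotropic. -/
theorem stmt_5 :
    CV d₁ = comm1 d₁ ∧
    CV d₁ = Submodule.span F3
      {e ⊗ₜ[F3] (e ⊗ₜ[F3] e), e ⊗ₜ[F3] (e ⊗ₜ[F3] f),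
       e ⊗ₜ[F3] (f ⊗ₜ[F3] e), e ⊗ₜ[F3] (f ⊗ₜ[F3] f)} ∧
    Module.finrank F3 (CV d₁) = 4 ∧
    TotallyIsotropic (CV d₁) := by
  have hCV : CV d₁ = range (TensorProduct.mk F3 W (W ⊗[F3] W) e) := by
    rw [CV, d₁_sub_id, ker_comp_eq_range_of_exact
      (Module.Flat.rTensor_preserves_injective_linearMap _ toSpanSingleton_e_injective)
      (Module.Flat.rTensor_exact _ exact_toSpanSingleton_e_proj_one),
      range_rTensor_toSpanSingleton]
  have hcomm : comm1 d₁ = range (TensorProduct.mk F3 W (W ⊗[F3] W) e) := by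
    rw [comm1, d₁_sub_id, range_comp_of_range_eq_top _
      (range_eq_top.mpr (rTensor_surjective _ proj_one_surjective)),
      range_rTensor_toSpanSingleton]
  rw [hCV, hcomm, span_generators]
  exact ⟨rfl, rfl, finrank_range_mk_e, totallyIsotropic_range_mk_e⟩
end
end

section
/- With the tensor-product setup over GF(3): C_V(d₃) = span{e⊗e⊗e, f⊗e⊗e − e⊗f⊗e, f⊗e⊗e − e⊗e⊗f} has dimension 3, [V,d₃] has dimension 5, and [V,d₃,d₃] = span{e⊗e⊗e, e⊗e⊗f + e⊗f⊗e + f⊗e⊗e} has dimension 2; moreover C_V(d₃) is properly contained in [V,d₃] and C_V(d₃) is totally isotropic with respect to B. -/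
noncomputable section

open TensorProduct

/-!
Write `N = d₃ - 1`, so that `C_V(d₃) = ker N`, `[V,d₃] = im N` and `[V,d₃,d₃] = im N²`.
Evaluating `N` on the eight tensors in `e, f` exhibits three independent vectors in `ker N` and
five independent vectors in `im N`; since `dim V = 8`, rank–nullity forces `ker N` and `im N` to
be spanned by them, and `im N² = N (im N)` is then read off. Any two of `e⊗e⊗e, e⊗e⊗f, e⊗f⊗e,
f⊗e⊗e` have `e` in a common slot and `⟨e,e⟩ = 0`, so `B` vanishes on their span, which contains
`ker N`.
-/

open Submodule

theorem LinearMap.apply_apply_eq_zero_of_mem_span {R M P : Type*} [CommSemiring R]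
    [AddCommMonoid M] [Module R M] [AddCommMonoid P] [Module R P] (B : M →ₗ[R] M →ₗ[R] P)
    {s : Set M} (hs : ∀ x ∈ s, ∀ y ∈ s, B x y = 0) {x y : M}
    (hx : x ∈ span R s) (hy : y ∈ span R s) : B x y = 0 := by
  have hx' : ∀ y ∈ s, B x y = 0 := fun y hy ↦
    (span_le (p := LinearMap.ker (B.flip y))).2 (fun x hx ↦ hs x hx y hy) hx
  exact (span_le (p := LinearMap.ker (B x))).2 hx' hy

theorem finrank_span_range_fin {K M : Type*} [DivisionRing K] [AddCommGroup M] [Module K M]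
    {n : ℕ} {v : Fin n → M} (hv : LinearIndependent K v) :
    Module.finrank K (span K (Set.range v)) = n := by
  rw [finrank_span_eq_card hv, Fintype.card_fin]

namespace TensorCube

local notation "⟮" x ", " y ", " z "⟯" => (x ⊗ₜ[F3] (y ⊗ₜ[F3] z) : V)

lemma d_e : d e = e := by decide
lemma d_f : d f = e + f := by decide
lemma ω_e_e : ω e e = 0 := by decide

lemma finrank_V : Module.finrank F3 V = 8 := by
  simp [Module.finrank_tensorProduct]

lemma two_mul_two_eq_one : (2 : F3) * 2 = 1 := by decide

def N : V →ₗ[F3] V := d₃ - LinearMap.id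

lemma N_tmul (x y z : W) : N ⟮x, y, z⟯ = ⟮d x, d y, d z⟯ - ⟮x, y, z⟯ := by
  simp [N, d₃]

lemma N_eee : N ⟮e, e, e⟯ = 0 := by simp [N_tmul, d_e]
lemma N_eef : N ⟮e, e, f⟯ = ⟮e, e, e⟯ := by simp [N_tmul, d_e, d_f, tmul_add]
lemma N_efe : N ⟮e, f, e⟯ = ⟮e, e, e⟯ := by simp [N_tmul, d_e, d_f, tmul_add, add_tmul]
lemma N_fee : N ⟮f, e, e⟯ = ⟮e, e, e⟯ := by simp [N_tmul, d_e, d_f, add_tmul]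
lemma N_eff : N ⟮e, f, f⟯ = ⟮e, e, e⟯ + ⟮e, e, f⟯ + ⟮e, f, e⟯ := by
  simp [N_tmul, d_e, d_f, tmul_add, add_tmul]; abel
lemma N_fef : N ⟮f, e, f⟯ = ⟮e, e, e⟯ + ⟮e, e, f⟯ + ⟮f, e, e⟯ := by
  simp [N_tmul, d_e, d_f, tmul_add, add_tmul]; abel
lemma N_ffe : N ⟮f, f, e⟯ = ⟮e, e, e⟯ + ⟮e, f, e⟯ + ⟮f, e, e⟯ := by
  simp [N_tmul, d_e, d_f, tmul_add, add_tmul]; abel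
lemma N_fff : N ⟮f, f, f⟯ =
    ⟮e, e, e⟯ + ⟮e, e, f⟯ + ⟮e, f, e⟯ + ⟮e, f, f⟯ + ⟮f, e, e⟯ + ⟮f, e, f⟯ + ⟮f, f, e⟯ := by
  simp [N_tmul, d_f, tmul_add, add_tmul]; abel

def coords : V ≃ₗ[F3] (Fin 2 × Fin 2 × Fin 2 → F3) :=
  ((Pi.basisFun F3 (Fin 2)).tensorProduct
    ((Pi.basisFun F3 (Fin 2)).tensorProduct (Pi.basisFun F3 (Fin 2)))).equivFun

lemma coords_tmul (x y z : W) : coords ⟮x, y, z⟯ = fun p ↦ x p.1 * (y p.2.1 * z p.2.2) := by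
  funext ⟨i, j, k⟩
  simp [coords, Module.Basis.tensorProduct_repr_tmul_apply, mul_comm]

lemma linearIndependent_of_coords {n : ℕ} {v : Fin n → V}
    (h : ∀ c : Fin n → F3, ∑ i, c i • coords (v i) = 0 → ∀ i, c i = 0) :
    LinearIndependent F3 v :=
  .of_comp coords.toLinearMap (Fintype.linearIndependent_iff.2 h)

def kerBasis : Fin 3 → V := ![⟮e, e, e⟯, ⟮f, e, e⟯ - ⟮e, f, e⟯, ⟮f, e, e⟯ - ⟮e, e, f⟯]

lemma range_kerBasis :
    Set.range kerBasis = {⟮e, e, e⟯, ⟮f, e, e⟯ - ⟮e, f, e⟯, ⟮f, e, e⟯ - ⟮e, e, f⟯} := by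
  rw [kerBasis, Matrix.range_cons, Matrix.range_cons_cons_empty, Set.singleton_union]

def rangeBasis : Fin 5 → V := N ∘ ![⟮e, e, f⟯, ⟮e, f, f⟯, ⟮f, e, f⟯, ⟮f, f, e⟯, ⟮f, f, f⟯]

lemma linearIndependent_kerBasis : LinearIndependent F3 kerBasis :=
  linearIndependent_of_coords (by simp [kerBasis, Fin.sum_univ_succ, coords_tmul]; decide)

set_option maxRecDepth 2000 in
lemma linearIndependent_rangeBasis : LinearIndependent F3 rangeBasis :=
  linearIndependent_of_coords (by
    simp [rangeBasis, Fin.sum_univ_succ, N_eef, N_eff, N_fef, N_ffe, N_fff, coords_tmul]; decide)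

lemma span_kerBasis_le_ker : span F3 (Set.range kerBasis) ≤ LinearMap.ker N := by
  rw [span_le, Set.range_subset_iff]
  intro i
  fin_cases i <;> simp [kerBasis, N_eee, N_eef, N_efe, N_fee]

lemma span_rangeBasis_le_range : span F3 (Set.range rangeBasis) ≤ LinearMap.range N :=
  span_le.2 (Set.range_comp_subset_range _ N)

lemma finrank_ker_N_and_range_N :
    Module.finrank F3 (LinearMap.ker N) = 3 ∧ Module.finrank F3 (LinearMap.range N) = 5 := by
  have h3 := finrank_mono span_kerBasis_le_ker
  have h5 := finrank_mono span_rangeBasis_le_range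
  rw [finrank_span_range_fin linearIndependent_kerBasis] at h3
  rw [finrank_span_range_fin linearIndependent_rangeBasis] at h5
  have := LinearMap.finrank_range_add_finrank_ker N
  rw [finrank_V] at this
  omega

lemma ker_N_eq : LinearMap.ker N =
    span F3 {⟮e, e, e⟯, ⟮f, e, e⟯ - ⟮e, f, e⟯, ⟮f, e, e⟯ - ⟮e, e, f⟯} := by
  rw [← range_kerBasis]
  exact (eq_of_le_of_finrank_eq span_kerBasis_le_ker <| by
    rw [finrank_span_range_fin linearIndependent_kerBasis, finrank_ker_N_and_range_N.1]).symm

lemma range_N_eq : LinearMap.range N = span F3 (Set.range rangeBasis) :=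
  (eq_of_le_of_finrank_eq span_rangeBasis_le_range <| by
    rw [finrank_span_range_fin linearIndependent_rangeBasis, finrank_ker_N_and_range_N.2]).symm

lemma N_N_eff : N (N ⟮e, f, f⟯) = (2 : F3) • ⟮e, e, e⟯ := by
  simp only [N_eff, map_add, N_eee, N_eef, N_efe]
  module

lemma N_N_fff : N (N ⟮f, f, f⟯) = (2 : F3) • (⟮e, e, f⟯ + ⟮e, f, e⟯ + ⟮f, e, e⟯) := by
  simp only [N_fff, map_add, N_eee, N_eef, N_efe, N_fee, N_eff, N_fef, N_ffe]
  match_scalars <;> decide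

lemma range_N_comp_N_eq : LinearMap.range (N ∘ₗ N) =
    span F3 {⟮e, e, e⟯, ⟮e, e, f⟯ + ⟮e, f, e⟯ + ⟮f, e, e⟯} := by
  apply le_antisymm
  · rw [LinearMap.range_comp, range_N_eq, map_span_le, Set.forall_mem_range]
    simp only [rangeBasis, Function.comp_apply, Fin.forall_fin_succ, Matrix.cons_val_zero,
      Matrix.cons_val_succ, Matrix.cons_val_fin_one, N_eef, N_eee, zero_mem, N_eff, N_efe, N_fef,
      N_fee, N_ffe, map_add, zero_add, N_N_fff, forall_const, and_self_left, true_and]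
    exact ⟨add_mem (subset_span (by simp)) (subset_span (by simp)),
      smul_mem _ _ (subset_span (by simp))⟩
  · have h_eee : N (N ((2 : F3) • ⟮e, f, f⟯)) = ⟮e, e, e⟯ := by
      rw [map_smul, map_smul, N_N_eff, smul_smul, two_mul_two_eq_one, one_smul]
    have h_sum : N (N ((2 : F3) • ⟮f, f, f⟯)) = ⟮e, e, f⟯ + ⟮e, f, e⟯ + ⟮f, e, e⟯ := by
      rw [map_smul, map_smul, N_N_fff, smul_smul, two_mul_two_eq_one, one_smul]
    rw [span_le, Set.insert_subset_iff, Set.singleton_subset_iff]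
    exact ⟨⟨_, h_eee⟩, ⟨_, h_sum⟩⟩

lemma ker_N_le_range_N : LinearMap.ker N ≤ LinearMap.range N := by
  rw [ker_N_eq, span_le, Set.insert_subset_iff, Set.insert_subset_iff, Set.singleton_subset_iff]
  refine ⟨⟨⟮e, e, f⟯, N_eef⟩, ⟨⟮f, e, f⟯ - ⟮e, f, f⟯, ?_⟩, ⟨⟮f, f, e⟯ - ⟮e, f, f⟯, ?_⟩⟩
  · rw [map_sub, N_fef, N_eff]; abel
  · rw [map_sub, N_ffe, N_eff]; abel

lemma finrank_range_N_comp_N : Module.finrank F3 (LinearMap.range (N ∘ₗ N)) = 2 := by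
  rw [range_N_comp_N_eq, ← Matrix.range_cons_cons_empty _ _ ![], finrank_span_range_fin]
  exact linearIndependent_of_coords (by simp [Fin.sum_univ_succ, coords_tmul]; decide)

lemma B_tmul (x y z x' y' z' : W) :
    B ⟮x, y, z⟯ ⟮x', y', z'⟯ = ω x x' * (ω y y' * ω z z') := by
  simp [B, mul_comm]

def atMostOneF : Submodule F3 V := span F3 {⟮e, e, e⟯, ⟮e, e, f⟯, ⟮e, f, e⟯, ⟮f, e, e⟯}

lemma totallyIsotropic_atMostOneF : TotallyIsotropic atMostOneF :=
  fun _ hu _ hv ↦ B.apply_apply_eq_zero_of_mem_span (by simp [B_tmul, ω_e_e]) hu hv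

lemma ker_N_le_atMostOneF : LinearMap.ker N ≤ atMostOneF := by
  rw [ker_N_eq, span_le, Set.insert_subset_iff, Set.insert_subset_iff, Set.singleton_subset_iff]
  exact ⟨subset_span (by simp), sub_mem (subset_span (by simp)) (subset_span (by simp)),
    sub_mem (subset_span (by simp)) (subset_span (by simp))⟩

end TensorCube

open TensorCube in
/-- **Lemma 3.1(iii).** `C_V(d₃) = span{e⊗e⊗e, f⊗e⊗e − e⊗f⊗e, f⊗e⊗e − e⊗e⊗f}` has
dimension 3, `[V,d₃]` has dimension 5, and `[V,d₃,d₃] = span{e⊗e⊗e, e⊗e⊗f + e⊗f⊗e + f⊗e⊗e}`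
has dimension 2; moreover `C_V(d₃)` is properly contained in `[V,d₃]` and is totally
isotropic. -/
theorem stmt_7 :
    CV d₃ = Submodule.span F3
      {e ⊗ₜ[F3] (e ⊗ₜ[F3] e),
       f ⊗ₜ[F3] (e ⊗ₜ[F3] e) - e ⊗ₜ[F3] (f ⊗ₜ[F3] e),
       f ⊗ₜ[F3] (e ⊗ₜ[F3] e) - e ⊗ₜ[F3] (e ⊗ₜ[F3] f)} ∧
    Module.finrank F3 (CV d₃) = 3 ∧
    Module.finrank F3 (comm1 d₃) = 5 ∧
    comm2 d₃ = Submodule.span F3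
      {e ⊗ₜ[F3] (e ⊗ₜ[F3] e),
       e ⊗ₜ[F3] (e ⊗ₜ[F3] f) + e ⊗ₜ[F3] (f ⊗ₜ[F3] e) + f ⊗ₜ[F3] (e ⊗ₜ[F3] e)} ∧
    Module.finrank F3 (comm2 d₃) = 2 ∧
    CV d₃ < comm1 d₃ ∧
    TotallyIsotropic (CV d₃) := by
  rw [show CV d₃ = LinearMap.ker N from rfl, show comm1 d₃ = LinearMap.range N from rfl,
    show comm2 d₃ = LinearMap.range (N ∘ₗ N) from rfl]
  obtain ⟨h3, h5⟩ := finrank_ker_N_and_range_N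
  refine ⟨ker_N_eq, h3, h5, range_N_comp_N_eq, finrank_range_N_comp_N,
    lt_of_le_of_finrank_lt_finrank ker_N_le_range_N (by omega), fun u hu v hv ↦ ?_⟩
  exact totallyIsotropic_atMostOneF u (ker_N_le_atMostOneF hu) v (ker_N_le_atMostOneF hv)
end
end

section
/- With the tensor-product setup over GF(3): each of the common fixed spaces C_V(d₁) ∩ C_V(d₂) = span{e⊗e⊗e, e⊗e⊗f}, C_V(d₁) ∩ C_V(d₃) = span{e⊗e⊗e, e⊗e⊗f − e⊗f⊗e}, and C_V(d₂) ∩ C_V(d₃) = span{e⊗e⊗e, f⊗e⊗e + e⊗f⊗e + e⊗e⊗f} has dimension 2. -/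
noncomputable section

open TensorProduct

/-!
In the basis `{e, f}` of `W` the map `d` is the unipotent matrix `[[1, 1], [0, 1]]`, so in the
product basis `{x ⊗ y ⊗ z}` of `V` each `dᵢ` is a Kronecker product of such matrices (and of the
identity and `d⁻¹`). The condition `dᵢ v = v` is therefore an explicit linear system in the eight
coordinates of `v`; solving the systems over `GF(3)` and intersecting them leaves, in each case,
exactly the span of the two named vectors, which are linearly independent by looking at their
`e ⊗ e ⊗ e` and `e ⊗ e ⊗ f` coordinates.
-/

open Matrix Kronecker

theorem LinearMap.mem_ker_sub_id_iff_toMatrix_mulVec {R M ι : Type*} [CommRing R]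
    [AddCommGroup M] [Module R M] [Fintype ι] [DecidableEq ι] (b : Module.Basis ι R M)
    (g : M →ₗ[R] M) (x : M) :
    x ∈ LinearMap.ker (g - LinearMap.id) ↔
      LinearMap.toMatrix b b g *ᵥ b.repr x = b.repr x := by
  rw [LinearMap.toMatrix_mulVec_repr, LinearMap.mem_ker, LinearMap.sub_apply, LinearMap.id_apply,
    sub_eq_zero, ← b.repr.injective.eq_iff, ← DFunLike.coe_fn_eq]

theorem Submodule.mem_span_pair_of_repr {R M ι : Type*} [Semiring R] [AddCommMonoid M]
    [Module R M] (b : Module.Basis ι R M) {x u v : M} (s t : R)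
    (h : ∀ i, b.repr x i = s * b.repr u i + t * b.repr v i) :
    x ∈ Submodule.span R {u, v} :=
  Submodule.mem_span_pair.mpr ⟨s, t, b.repr.injective <| Finsupp.ext fun i => by simp [h]⟩

theorem finrank_span_pair {K M : Type*} [DivisionRing K] [AddCommGroup M] [Module K M] {u v : M}
    (h : LinearIndependent K ![u, v]) : Module.finrank K (Submodule.span K {u, v}) = 2 := by
  rw [← Matrix.range_cons_cons_empty, finrank_span_eq_card h, Fintype.card_fin]

theorem LinearIndependent.pair_of_repr {R M ι : Type*} [Ring R] [NoZeroDivisors R]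
    [AddCommGroup M] [Module R M] (b : Module.Basis ι R M) {u v : M} (i j : ι)
    (hui : b.repr u i ≠ 0) (huj : b.repr u j = 0) (hvj : b.repr v j ≠ 0) :
    LinearIndependent R ![u, v] := by
  refine LinearIndependent.pair_iff.mpr fun s t hst => ?_
  have hi := congr($(congrArg b.repr hst) i)
  have hj := congr($(congrArg b.repr hst) j)
  simp only [map_add, map_smul, Finsupp.add_apply, Finsupp.smul_apply, smul_eq_mul, map_zero,
    Finsupp.coe_zero, Pi.zero_apply, huj, mul_zero, zero_add, mul_eq_zero, hvj, or_false] at hi hj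
  subst hj
  simpa [hui] using hi

def basisV : Module.Basis (Fin 2 × Fin 2 × Fin 2) F3 V :=
  (Pi.basisFun F3 (Fin 2)).tensorProduct
    ((Pi.basisFun F3 (Fin 2)).tensorProduct (Pi.basisFun F3 (Fin 2)))

theorem basisV_repr_tmul (u v w : W) (i j k : Fin 2) :
    basisV.repr (u ⊗ₜ (v ⊗ₜ w)) (i, j, k) = u i * v j * w k := by
  simp only [basisV, Module.Basis.tensorProduct_repr_tmul_apply, Pi.basisFun_repr, smul_eq_mul]
  ring

theorem toMatrix_d₁ : LinearMap.toMatrix basisV basisV d₁ = !![1, 1; 0, 1] ⊗ₖ 1 := by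
  simp only [basisV, d₁, TensorProduct.toMatrix_map, LinearMap.toMatrix_eq_toMatrix', d,
    LinearMap.toMatrix'_toLin', LinearMap.toMatrix_id]

theorem toMatrix_d₂ :
    LinearMap.toMatrix basisV basisV d₂ = !![1, 1; 0, 1] ⊗ₖ (!![1, -1; 0, 1] ⊗ₖ 1) := by
  simp only [basisV, d₂, TensorProduct.toMatrix_map, LinearMap.toMatrix_eq_toMatrix', d, dinv,
    LinearMap.toMatrix'_toLin', LinearMap.toMatrix'_id]

theorem toMatrix_d₃ :
    LinearMap.toMatrix basisV basisV d₃ =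
      !![1, 1; 0, 1] ⊗ₖ (!![1, 1; 0, 1] ⊗ₖ !![1, 1; 0, 1]) := by
  simp only [basisV, d₃, TensorProduct.toMatrix_map, LinearMap.toMatrix_eq_toMatrix', d,
    LinearMap.toMatrix'_toLin']

theorem mem_CV_d₁_iff (x : V) : x ∈ CV d₁ ↔ ∀ j k, basisV.repr x (1, j, k) = 0 := by
  rw [CV, LinearMap.mem_ker_sub_id_iff_toMatrix_mulVec basisV, toMatrix_d₁]
  simp only [funext_iff, Prod.forall, Fin.forall_fin_two, mulVec, dotProduct,
    Fintype.sum_prod_type, Fin.sum_univ_two, kroneckerMap_apply, one_apply, of_apply, cons_val',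
    cons_val_zero, cons_val_one, cons_val_fin_one]
  grind

theorem mem_CV_d₂_iff (x : V) : x ∈ CV d₂ ↔
    ∀ k, basisV.repr x (1, 1, k) = 0 ∧
      basisV.repr x (1, 0, k) = basisV.repr x (0, 1, k) := by
  rw [CV, LinearMap.mem_ker_sub_id_iff_toMatrix_mulVec basisV, toMatrix_d₂]
  simp only [funext_iff, Prod.forall, Fin.forall_fin_two, mulVec, dotProduct,
    Fintype.sum_prod_type, Fin.sum_univ_two, kroneckerMap_apply, one_apply, of_apply, cons_val',
    cons_val_zero, cons_val_one, cons_val_fin_one]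
  grind

theorem mem_CV_d₃_iff (x : V) : x ∈ CV d₃ ↔
    basisV.repr x (1, 1, 0) = 0 ∧ basisV.repr x (1, 0, 1) = 0 ∧
      basisV.repr x (0, 1, 1) = 0 ∧ basisV.repr x (1, 1, 1) = 0 ∧
      basisV.repr x (1, 0, 0) + basisV.repr x (0, 1, 0) + basisV.repr x (0, 0, 1) = 0 := by
  rw [CV, LinearMap.mem_ker_sub_id_iff_toMatrix_mulVec basisV, toMatrix_d₃]
  -- The equations say that the pairwise sums of `c₁₁₀, c₁₀₁, c₀₁₁` vanish; this forces the three
  -- coordinates to vanish because `2` is invertible in `GF(3)`.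
  simp only [funext_iff, Prod.forall, Fin.forall_fin_two, mulVec, dotProduct,
    Fintype.sum_prod_type, Fin.sum_univ_two, kroneckerMap_apply, of_apply, cons_val',
    cons_val_zero, cons_val_one, cons_val_fin_one]
  grind

theorem inf_CV_d₁_d₂ : CV d₁ ⊓ CV d₂ = Submodule.span F3
    {e ⊗ₜ[F3] (e ⊗ₜ[F3] e), e ⊗ₜ[F3] (e ⊗ₜ[F3] f)} := by
  ext x
  rw [Submodule.mem_inf, mem_CV_d₁_iff, mem_CV_d₂_iff]
  refine ⟨fun hx ↦ Submodule.mem_span_pair_of_repr basisV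
    (basisV.repr x (0, 0, 0)) (basisV.repr x (0, 0, 1)) ?_, fun hx ↦ ?_⟩
  on_goal 2 => obtain ⟨s, t, rfl⟩ := Submodule.mem_span_pair.mp hx
  all_goals
    simp only [Prod.forall, Fin.forall_fin_two, map_add, map_smul, Finsupp.coe_add,
      Finsupp.coe_smul, Pi.add_apply, Pi.smul_apply, smul_eq_mul,
      basisV_repr_tmul, e, f, cons_val_zero, cons_val_one, cons_val_fin_one]
    grind

theorem inf_CV_d₁_d₃ : CV d₁ ⊓ CV d₃ = Submodule.span F3
    {e ⊗ₜ[F3] (e ⊗ₜ[F3] e), e ⊗ₜ[F3] (e ⊗ₜ[F3] f) - e ⊗ₜ[F3] (f ⊗ₜ[F3] e)} := by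
  ext x
  rw [Submodule.mem_inf, mem_CV_d₁_iff, mem_CV_d₃_iff]
  refine ⟨fun hx ↦ Submodule.mem_span_pair_of_repr basisV
    (basisV.repr x (0, 0, 0)) (basisV.repr x (0, 0, 1)) ?_, fun hx ↦ ?_⟩
  on_goal 2 => obtain ⟨s, t, rfl⟩ := Submodule.mem_span_pair.mp hx
  all_goals
    simp only [Prod.forall, Fin.forall_fin_two, map_add, map_sub, map_smul, Finsupp.coe_add,
      Finsupp.coe_sub, Finsupp.coe_smul, Pi.add_apply, Pi.sub_apply, Pi.smul_apply, smul_eq_mul,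
      basisV_repr_tmul, e, f, cons_val_zero, cons_val_one, cons_val_fin_one]
    grind

theorem inf_CV_d₂_d₃ : CV d₂ ⊓ CV d₃ = Submodule.span F3
    {e ⊗ₜ[F3] (e ⊗ₜ[F3] e),
     f ⊗ₜ[F3] (e ⊗ₜ[F3] e) + e ⊗ₜ[F3] (f ⊗ₜ[F3] e) + e ⊗ₜ[F3] (e ⊗ₜ[F3] f)} := by
  ext x
  rw [Submodule.mem_inf, mem_CV_d₂_iff, mem_CV_d₃_iff]
  -- `c₁₀₀ = c₀₁₀` and `c₁₀₀ + c₀₁₀ + c₀₀₁ = 0` say exactly that the three coordinates agree,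
  -- since `3 = 0` in `GF(3)`.
  refine ⟨fun hx ↦ Submodule.mem_span_pair_of_repr basisV
    (basisV.repr x (0, 0, 0)) (basisV.repr x (0, 0, 1)) ?_, fun hx ↦ ?_⟩
  on_goal 2 => obtain ⟨s, t, rfl⟩ := Submodule.mem_span_pair.mp hx
  all_goals
    simp only [Prod.forall, Fin.forall_fin_two, map_add, map_smul, Finsupp.coe_add,
      Finsupp.coe_smul, Pi.add_apply, Pi.smul_apply, smul_eq_mul,
      basisV_repr_tmul, e, f, cons_val_zero, cons_val_one, cons_val_fin_one]
    grind

/-- **Lemma 3.1(iv),(v),(vi).** The common fixed spaces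
`C_V(d₁) ∩ C_V(d₂) = span{e⊗e⊗e, e⊗e⊗f}`,
`C_V(d₁) ∩ C_V(d₃) = span{e⊗e⊗e, e⊗e⊗f − e⊗f⊗e}` and
`C_V(d₂) ∩ C_V(d₃) = span{e⊗e⊗e, f⊗e⊗e + e⊗f⊗e + e⊗e⊗f}` each have dimension 2. -/
theorem stmt_8 :
    (CV d₁ ⊓ CV d₂ = Submodule.span F3
      {e ⊗ₜ[F3] (e ⊗ₜ[F3] e), e ⊗ₜ[F3] (e ⊗ₜ[F3] f)} ∧
     Module.finrank F3 (CV d₁ ⊓ CV d₂ : Submodule F3 V) = 2) ∧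
    (CV d₁ ⊓ CV d₃ = Submodule.span F3
      {e ⊗ₜ[F3] (e ⊗ₜ[F3] e),
       e ⊗ₜ[F3] (e ⊗ₜ[F3] f) - e ⊗ₜ[F3] (f ⊗ₜ[F3] e)} ∧
     Module.finrank F3 (CV d₁ ⊓ CV d₃ : Submodule F3 V) = 2) ∧
    (CV d₂ ⊓ CV d₃ = Submodule.span F3
      {e ⊗ₜ[F3] (e ⊗ₜ[F3] e),
       f ⊗ₜ[F3] (e ⊗ₜ[F3] e) + e ⊗ₜ[F3] (f ⊗ₜ[F3] e) + e ⊗ₜ[F3] (e ⊗ₜ[F3] f)} ∧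
     Module.finrank F3 (CV d₂ ⊓ CV d₃ : Submodule F3 V) = 2) := by
  refine ⟨⟨inf_CV_d₁_d₂, ?_⟩, ⟨inf_CV_d₁_d₃, ?_⟩, ⟨inf_CV_d₂_d₃, ?_⟩⟩
  on_goal 1 => rw [inf_CV_d₁_d₂]
  on_goal 2 => rw [inf_CV_d₁_d₃]
  on_goal 3 => rw [inf_CV_d₂_d₃]
  all_goals
    refine finrank_span_pair (.pair_of_repr basisV (0, 0, 0) (0, 0, 1) ?_ ?_ ?_) <;>
      simp [basisV_repr_tmul, e, f]
end
end

section
/- With the tensor-product setup over GF(3): the joint fixed space C_V(d₁) ∩ C_V(d₂) ∩ C_V(d₃) equals the 1-dimensional span of e⊗e⊗e. -/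
noncomputable section

open TensorProduct

/-! Over a field, tensoring is exact, so the kernel of `(d - 1) ⊗ 1 ⊗ 1` is
`ker (d - 1) ⊗ W ⊗ W = e ⊗ W ⊗ W`. On `e ⊗ W ⊗ W` the map `d₂` acts as `1 ⊗ d⁻¹ ⊗ 1`,
and `ker (d⁻¹ - 1) = ⟨e⟩` cuts the fixed space down to `e ⊗ e ⊗ W`; there `d₃` acts as
`1 ⊗ 1 ⊗ d`, leaving `⟨e ⊗ e ⊗ e⟩`. -/

namespace TensorProduct

variable {R M N P : Type*} [CommRing R] [AddCommGroup M] [AddCommGroup N] [AddCommGroup P]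
  [Module R M] [Module R N] [Module R P]

theorem rTensor_apply_eq_zero_iff_of_ker_eq_span [Module.Flat R P] (g : M →ₗ[R] N) {x : M}
    (hg : LinearMap.ker g = R ∙ x) (y : M ⊗[R] P) :
    g.rTensor P y = 0 ↔ ∃ p, y = x ⊗ₜ p := by
  have hexact : Function.Exact (LinearMap.toSpanSingleton R M x) g :=
    LinearMap.exact_iff.mpr (by rw [hg, LinearMap.span_singleton_eq_range])
  have hspan (z : R ⊗[R] P) :
      (LinearMap.toSpanSingleton R M x).rTensor P z = x ⊗ₜ TensorProduct.lid R P z := by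
    induction z using TensorProduct.induction_on with
    | zero => simp
    | tmul r p => simp [smul_tmul]
    | add z z' hz hz' => simp [hz, hz', tmul_add]
  constructor
  · intro hy
    obtain ⟨z, rfl⟩ := (Module.Flat.rTensor_exact P hexact y).mp hy
    exact ⟨_, hspan z⟩
  · rintro ⟨p, rfl⟩
    have hx : g x = 0 := LinearMap.mem_ker.mp (hg ▸ Submodule.mem_span_singleton_self x)
    simp [hx]

theorem eq_zero_of_tmul_eq_zero {K : Type*} [Field K] [Module K M] [Module K P] {x : M}
    (hx : x ≠ 0) {p : P} (h : x ⊗ₜ[K] p = 0) : p = 0 := by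
  obtain ⟨φ, hφ⟩ := Module.Projective.exists_dual_eq_one K hx
  simpa [hφ] using congrArg ((TensorProduct.lid K P).toLinearMap ∘ₗ φ.rTensor P) h

end TensorProduct

open Submodule

lemma e_ne_zero : e ≠ 0 := by
  simp [e, funext_iff]

lemma d_apply_e : d e = e := by
  ext i; fin_cases i <;> simp [d, e]

lemma mem_span_e_iff (w : W) : w ∈ F3 ∙ e ↔ w 1 = 0 := by
  rw [mem_span_singleton]
  constructor
  · rintro ⟨c, rfl⟩
    simp [e]
  · intro hw
    exact ⟨w 0, by ext i; fin_cases i <;> simp [e, hw]⟩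

lemma d_sub_id_apply (w : W) : (d - LinearMap.id : W →ₗ[F3] W) w = ![w 1, 0] := by
  ext i; fin_cases i <;> simp [d, dotProduct, Fin.sum_univ_two]

lemma dinv_sub_id_apply (w : W) : (dinv - LinearMap.id : W →ₗ[F3] W) w = ![-w 1, 0] := by
  ext i; fin_cases i <;> simp [dinv, dotProduct, Fin.sum_univ_two]

lemma ker_d_sub_id : LinearMap.ker (d - LinearMap.id : W →ₗ[F3] W) = F3 ∙ e := by
  ext w
  rw [LinearMap.mem_ker, d_sub_id_apply, mem_span_e_iff]
  simp [funext_iff, Fin.forall_fin_two]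

lemma ker_dinv_sub_id : LinearMap.ker (dinv - LinearMap.id : W →ₗ[F3] W) = F3 ∙ e := by
  ext w
  rw [LinearMap.mem_ker, dinv_sub_id_apply, mem_span_e_iff]
  simp [funext_iff, Fin.forall_fin_two]

lemma mem_CV_d₁_iff_s9 {v : V} : v ∈ CV d₁ ↔ ∃ w, v = e ⊗ₜ w := by
  have h : d₁ - LinearMap.id = (d - LinearMap.id).rTensor (W ⊗[F3] W) := by
    rw [LinearMap.rTensor_sub, LinearMap.rTensor_id]
    rfl
  rw [CV, LinearMap.mem_ker, h, rTensor_apply_eq_zero_iff_of_ker_eq_span _ ker_d_sub_id]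

lemma e_tmul_mem_CV_d₂_iff {w : W ⊗[F3] W} : e ⊗ₜ w ∈ CV d₂ ↔ ∃ u, w = e ⊗ₜ u := by
  have h : (d₂ - LinearMap.id : V →ₗ[F3] V) (e ⊗ₜ w) =
      e ⊗ₜ (dinv - LinearMap.id : W →ₗ[F3] W).rTensor W w := by
    rw [LinearMap.rTensor_sub, LinearMap.rTensor_id, LinearMap.sub_apply,
      LinearMap.sub_apply, tmul_sub]
    simp [d₂, d_apply_e, LinearMap.rTensor]
  rw [CV, LinearMap.mem_ker, h, ← rTensor_apply_eq_zero_iff_of_ker_eq_span _ ker_dinv_sub_id]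
  exact ⟨eq_zero_of_tmul_eq_zero e_ne_zero, fun hw => by rw [hw, tmul_zero]⟩

lemma e_tmul_e_tmul_mem_CV_d₃_iff {u : W} : e ⊗ₜ (e ⊗ₜ u) ∈ CV d₃ ↔ u ∈ F3 ∙ e := by
  have h : (d₃ - LinearMap.id : V →ₗ[F3] V) (e ⊗ₜ (e ⊗ₜ u)) =
      e ⊗ₜ (e ⊗ₜ (d - LinearMap.id : W →ₗ[F3] W) u) := by
    simp [d₃, d_apply_e, tmul_sub]
  rw [CV, LinearMap.mem_ker, h, ← ker_d_sub_id, LinearMap.mem_ker]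
  exact ⟨fun hu => eq_zero_of_tmul_eq_zero e_ne_zero (eq_zero_of_tmul_eq_zero e_ne_zero hu),
    fun hu => by rw [hu, tmul_zero, tmul_zero]⟩

lemma e_tmul_e_tmul_e_ne_zero : e ⊗ₜ[F3] (e ⊗ₜ[F3] e) ≠ 0 :=
  fun h => e_ne_zero (eq_zero_of_tmul_eq_zero e_ne_zero (eq_zero_of_tmul_eq_zero e_ne_zero h))

lemma CV_d₁_inf_CV_d₂_inf_CV_d₃ :
    CV d₁ ⊓ CV d₂ ⊓ CV d₃ = F3 ∙ e ⊗ₜ[F3] (e ⊗ₜ[F3] e) := by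
  apply le_antisymm
  · rintro v ⟨⟨h₁, h₂⟩, h₃⟩
    obtain ⟨w, rfl⟩ := mem_CV_d₁_iff_s9.mp h₁
    obtain ⟨u, rfl⟩ := e_tmul_mem_CV_d₂_iff.mp h₂
    obtain ⟨c, rfl⟩ := mem_span_singleton.mp (e_tmul_e_tmul_mem_CV_d₃_iff.mp h₃)
    exact mem_span_singleton.mpr ⟨c, by rw [tmul_smul, tmul_smul]⟩
  · rw [span_singleton_le_iff_mem]
    exact ⟨⟨mem_CV_d₁_iff_s9.mpr ⟨_, rfl⟩, e_tmul_mem_CV_d₂_iff.mpr ⟨_, rfl⟩⟩,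
      e_tmul_e_tmul_mem_CV_d₃_iff.mpr (mem_span_singleton_self e)⟩

/-- **Lemma 3.1(vii).** The joint fixed space `C_V(d₁) ∩ C_V(d₂) ∩ C_V(d₃)` equals the
1-dimensional span of `e⊗e⊗e`. -/
theorem stmt_9 :
    CV d₁ ⊓ CV d₂ ⊓ CV d₃ = Submodule.span F3 {e ⊗ₜ[F3] (e ⊗ₜ[F3] e)} ∧
    Module.finrank F3 (CV d₁ ⊓ CV d₂ ⊓ CV d₃ : Submodule F3 V) = 1 := by
  rw [CV_d₁_inf_CV_d₂_inf_CV_d₃]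
  exact ⟨rfl, finrank_span_singleton e_tmul_e_tmul_e_ne_zero⟩
end
end

section
/- Let G be a finite group, Z a subgroup of G of order 3, and H = C_G(Z). Suppose Q is a normal 3-subgroup of H with C_H(Q) = Z. Then every Sylow 3-subgroup of H is a Sylow 3-subgroup of G. -/
/-!
Let `S` be a Sylow 3-subgroup of `H = C_G(Z)`. Both `Z` and `Q` are normal 3-subgroups of `H`,
so they lie in `S`; hence `Z(S) ≤ C_H(Q) = Z ≤ Z(S)`, i.e. `Z(S) = Z`. A 3-subgroup `K` of `G`
with `S ≤ K ≤ N_G(S)` normalizes `Z(S) = Z`, and since `|Aut Z| = 2` is prime to 3 it centralizes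
`Z`, so `K ≤ H` and `K = S`. A `p`-subgroup that is maximal among the `p`-subgroups of its
normalizer is Sylow, because `p`-groups satisfy the normalizer condition.
-/

open Subgroup

section

variable {G : Type*} [Group G]

theorem Subgroup.conj_mem_inf_centralizer {P : Subgroup G} {g x : G}
    (hg : g ∈ normalizer (P : Set G)) (hx : x ∈ P ⊓ centralizer (P : Set G)) :
    g * x * g⁻¹ ∈ P ⊓ centralizer (P : Set G) := by
  refine ⟨(mem_normalizer_iff.mp hg x).mp hx.1, mem_centralizer_iff.mpr fun s hs => ?_⟩
  have hs' : g⁻¹ * s * g ∈ P := by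
    simpa [mul_assoc] using (mem_normalizer_iff.mp (inv_mem hg) s).mp hs
  have hcomm := mem_centralizer_iff.mp hx.2 _ hs'
  calc s * (g * x * g⁻¹) = g * ((g⁻¹ * s * g) * x) * g⁻¹ := by group
    _ = g * (x * (g⁻¹ * s * g)) * g⁻¹ := by rw [hcomm]
    _ = g * x * g⁻¹ * s := by group

theorem Subgroup.normalizer_le_normalizer_inf_centralizer (P : Subgroup G) :
    normalizer (P : Set G) ≤ normalizer ((P ⊓ centralizer (P : Set G) : Subgroup G) : Set G) :=
  fun g hg => mem_normalizer_iff.mpr fun x =>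
    ⟨conj_mem_inf_centralizer hg, fun h => by
      simpa [mul_assoc] using conj_mem_inf_centralizer (inv_mem hg) h⟩

theorem card_mulAut_of_card_prime {A : Type*} [Group A] {q : ℕ} [hq : Fact q.Prime]
    (hA : Nat.card A = q) : Nat.card (MulAut A) = q - 1 := by
  have : Finite A := Nat.finite_of_card_ne_zero (hA ▸ hq.out.ne_zero)
  have : IsCyclic A := isCyclic_of_prime_card hA
  rw [IsCyclic.card_mulAut, hA, Nat.totient_prime hq.out]

theorem IsPGroup.le_centralizer_of_le_normalizer {p : ℕ} {K Z : Subgroup G} (hK : IsPGroup p K)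
    (hKZ : K ≤ normalizer (Z : Set G)) (hcop : (Nat.card (MulAut Z)).Coprime p) :
    K ≤ centralizer (Z : Set G) := by
  intro k hk
  obtain ⟨m, hm⟩ := hK ⟨k, hk⟩
  set φ := Z.normalizerMonoidHom ⟨k, hKZ hk⟩
  have hφm : φ ^ p ^ m = 1 := by
    rw [← map_pow, ← map_one Z.normalizerMonoidHom]
    exact congrArg _ (Subtype.ext (by simpa using congrArg Subtype.val hm))
  have hφ : φ = 1 := orderOf_eq_one_iff.mp <|
    Nat.eq_one_of_dvd_coprimes (hcop.pow_right m) (orderOf_dvd_natCard φ)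
      (orderOf_dvd_of_pow_eq_one hφm)
  have hker : (⟨k, hKZ hk⟩ : normalizer (Z : Set G)) ∈ Z.normalizerMonoidHom.ker := hφ
  rw [normalizerMonoidHom_ker] at hker
  exact hker

theorem IsPGroup.exists_sylow_eq_of_normalizer [Finite G] {p : ℕ} [Fact p.Prime]
    {P : Subgroup G} (hP : IsPGroup p P)
    (hN : ∀ K : Subgroup G, IsPGroup p K → P ≤ K → K ≤ normalizer (P : Set G) → K ≤ P) :
    ∃ T : Sylow p G, (T : Subgroup G) = P := by
  refine ⟨⟨P, hP, fun {R} hR hPR => le_antisymm ?_ hPR⟩, rfl⟩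
  have : Group.IsNilpotent R := hR.isNilpotent
  have hself : normalizer (P.subgroupOf R : Set R) = P.subgroupOf R := by
    refine le_antisymm (fun x hx => ?_) le_normalizer
    rw [← subgroupOf_normalizer_eq hPR] at hx
    exact hN (R ⊓ normalizer (P : Set G)) (hR.to_le inf_le_left) (le_inf hPR le_normalizer)
      inf_le_right ⟨x.2, hx⟩
  exact subgroupOf_eq_top.mp <|
    normalizerCondition_iff_only_full_group_self_normalizing.mp
      Group.normalizerCondition_of_isNilpotent
      _ hself

theorem Sylow.le_map_subtype_of_conj_mem {p : ℕ} {H N : Subgroup G} (hNH : N ≤ H)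
    (hN : IsPGroup p N) (hconj : ∀ h ∈ H, ∀ n ∈ N, h * n * h⁻¹ ∈ N) (S : Sylow p H) :
    N ≤ (S : Subgroup H).map H.subtype := by
  have : (N.comap H.subtype).Normal := ⟨fun n hn g => hconj g g.2 n hn⟩
  rw [← map_subgroupOf_eq_of_le hNH]
  exact map_mono (hN.comap_subtype.le_sylow_of_normal S)

theorem Sylow.eq_map_subtype_of_le {p : ℕ} {H K : Subgroup G} (S : Sylow p H) (hK : IsPGroup p K)
    (hKH : K ≤ H) (hSK : (S : Subgroup H).map H.subtype ≤ K) :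
    K = (S : Subgroup H).map H.subtype := by
  have hmax : K.subgroupOf H = S := S.is_maximal' hK.comap_subtype (map_le_iff_le_comap.mp hSK)
  rw [← map_subgroupOf_eq_of_le hKH, hmax]

end

/-- **Lemma 4.1(i)** (second assertion). Let `G` be a finite group, `Z ≤ G` of order 3 and
`H = C_G(Z)`. If `Q` is a normal 3-subgroup of `H` with `C_H(Q) = Z`, then every Sylow
3-subgroup of `H` is a Sylow 3-subgroup of `G`. -/
theorem stmt_11 {G : Type*} [Group G] [Finite G] (Z : Subgroup G)
    (hZ : Nat.card Z = 3)
    (Q : Subgroup G) (hQle : Q ≤ Subgroup.centralizer (Z : Set G))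
    (hQ3 : IsPGroup 3 Q)
    (hQnorm : ∀ h ∈ Subgroup.centralizer (Z : Set G), ∀ q ∈ Q, h * q * h⁻¹ ∈ Q)
    (hCQ : Subgroup.centralizer (Z : Set G) ⊓ Subgroup.centralizer (Q : Set G) = Z) :
    ∀ S : Sylow 3 (Subgroup.centralizer (Z : Set G)),
      ∃ T : Sylow 3 G,
        (T : Subgroup G) =
          Subgroup.map (Subgroup.centralizer (Z : Set G)).subtype (S : Subgroup _) := by
  have : Fact (Nat.Prime 3) := ⟨Nat.prime_three⟩
  set H := centralizer (Z : Set G)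
  intro S
  set S' := (S : Subgroup H).map H.subtype
  have hZH : Z ≤ H := hCQ ▸ inf_le_left
  have hZS' : Z ≤ S' := Sylow.le_map_subtype_of_conj_mem hZH (IsPGroup.of_card (n := 1) hZ)
    (fun h hh z hz => by rw [(mem_centralizer_iff.mp hh z hz).symm, mul_inv_cancel_right]; exact hz)
    S
  have hQS' : Q ≤ S' := Sylow.le_map_subtype_of_conj_mem hQle hQ3 hQnorm S
  have hcenter : S' ⊓ centralizer (S' : Set G) = Z :=
    le_antisymm (hCQ ▸ inf_le_inf (map_subtype_le _) (centralizer_le hQS'))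
      (le_inf hZS' (le_centralizer_iff.mp (map_subtype_le _)))
  refine (S.isPGroup'.map H.subtype).exists_sylow_eq_of_normalizer fun K hK hS'K hKN => ?_
  have hKH : K ≤ H := hK.le_centralizer_of_le_normalizer
    (hKN.trans (hcenter ▸ normalizer_le_normalizer_inf_centralizer S'))
    (by rw [card_mulAut_of_card_prime hZ]; norm_num)
  exact (S.eq_map_subtype_of_le hK hKH hS'K).le
end
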